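/- For every even-signed permutation w in the group S^D_n, the cost of w (computed with factorizations into transpositions of S^D_n) is at least half of its total displacement: $(w) ≥ tvd(w)/2. -/

import Mathlib

/-- A signed permutation in the hyperoctahedral group `S^B_n`: a bijection of `ℤ`
that satisfies `w(i) = −w(−i)` and fixes every integer outside `{±1,…,±n}`
(this models the bijections of `{±1,…,±n}` with that symmetry). -/
def IsSignedPerm (n : ℕ) (w : Equiv.Perm ℤ) : Prop :=
  (∀ i : ℤ, w (-i) = - w i) ∧ (∀ i : ℤ, (n : ℤ) < |i| → w i = i)

/-- An even-signed permutation in `S^D_n`: a signed permutation `w` such that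
`#{i ∈ {1,…,n} : w(i) < 0}` is even. -/
def IsEvenSignedPerm (n : ℕ) (w : Equiv.Perm ℤ) : Prop :=
  IsSignedPerm n w ∧
  Even (((Finset.Icc (1 : ℤ) (n : ℤ)).filter (fun i => w i < 0)).card)

/-- Total displacement: `tvd(w) = ∑_{i=1}^n |w(i) − i|`. -/
noncomputable def tvdB (n : ℕ) (w : Equiv.Perm ℤ) : ℕ :=
  ∑ i ∈ Finset.Icc (1 : ℤ) (n : ℤ), (w i - i).natAbs

/-- `j ∈ {1,…,n−1}` is a break of `w` if `w` maps `{±1,…,±j}` to itself. -/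
def IsBreak (w : Equiv.Perm ℤ) (j : ℕ) : Prop :=
  ∀ i : ℤ, |i| ≤ (j : ℤ) → |w i| ≤ (j : ℤ)

/-- A break `j` is even if `#{i ∈ {1,…,j} : w(i) < 0}` is even. -/
def IsEvenBreak (w : Equiv.Perm ℤ) (j : ℕ) : Prop :=
  IsBreak w j ∧
  Even (((Finset.Icc (1 : ℤ) (j : ℤ)).filter (fun i => w i < 0)).card)

/-- The number of type `B` blocks: `bl^B(w) = 1 + #{breaks of w}`. -/
noncomputable def blB (n : ℕ) (w : Equiv.Perm ℤ) : ℕ :=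
  1 + Set.ncard {j : ℕ | 1 ≤ j ∧ j < n ∧ IsBreak w j}

/-- The number of type `D` blocks: `bl^D(w) = 1 + #{even breaks of w}`. -/
noncomputable def blD (n : ℕ) (w : Equiv.Perm ℤ) : ℕ :=
  1 + Set.ncard {j : ℕ | 1 ≤ j ∧ j < n ∧ IsEvenBreak w j}

/-- `t` is a transposition of `S^D_n` of cost `c`: `t = (i j)(−i −j)` for distinct
`i, j ∈ {±1,…,±n}` with `j ≠ ±i`, of cost `|i − j|`. -/
def IsDTransp (n : ℕ) (t : Equiv.Perm ℤ) (c : ℕ) : Prop :=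
  ∃ i j : ℤ, i ≠ 0 ∧ j ≠ 0 ∧ |i| ≤ (n : ℤ) ∧ |j| ≤ (n : ℤ) ∧ i ≠ j ∧ j ≠ -i ∧
    t = Equiv.swap i j * Equiv.swap (-i) (-j) ∧ c = (i - j).natAbs

/-- The cost of `w ∈ S^D_n`: the minimum of `$(t₁) + ⋯ + $(t_k)` over all factorizations
`w = t₁ ⋯ t_k` into transpositions of `S^D_n`. -/
noncomputable def costD (n : ℕ) (w : Equiv.Perm ℤ) : ℕ :=
  sInf {c : ℕ | ∃ L : List (Equiv.Perm ℤ × ℕ),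
    (∀ p ∈ L, IsDTransp n p.1 p.2) ∧
    (L.map Prod.fst).prod = w ∧ c = (L.map Prod.snd).sum}

/-!
Displacement is subadditive on signed permutations, and `(i j)(-i -j)` displaces exactly
`2 |i - j|` (each of its two moved points in `{1,…,n}` moves by `|i - j|`), so every
factorization of `w` costs at least `tvd(w) / 2`. What needs an argument is that a factorization
exists at all, since otherwise `costD` is `sInf ∅ = 0`. A transposition moving `n` back into
place reduces the rank; this fails only when `w n = -n`, which needs a preliminary transposition
through `1`, and for `n = 1` is excluded by the parity of the number of negative entries, which
transpositions of `S^D_n` preserve.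
-/

open Equiv Finset

namespace IsSignedPerm

variable {n : ℕ} {u v w : Perm ℤ}

theorem apply_zero (hw : IsSignedPerm n w) : w 0 = 0 := by
  have := hw.1 0
  rw [neg_zero] at this
  omega

theorem apply_ne_zero (hw : IsSignedPerm n w) {x : ℤ} (hx : x ≠ 0) : w x ≠ 0 :=
  fun h => hx (w.injective (h.trans hw.apply_zero.symm))

theorem abs_apply_le (hw : IsSignedPerm n w) {x : ℤ} (hx : |x| ≤ n) : |w x| ≤ n := by
  by_contra h
  have hfix := hw.2 (w x) (not_le.1 h)
  rw [w.injective hfix] at h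
  exact h hx

theorem abs_apply_abs (hw : IsSignedPerm n w) (x : ℤ) : |w (|x|)| = |w x| := by
  rcases abs_choice x with h | h <;> rw [h]
  rw [hw.1, abs_neg]

theorem natAbs_apply_abs_sub (hw : IsSignedPerm n w) (x : ℤ) :
    (w |x| - |x|).natAbs = (w x - x).natAbs := by
  rcases abs_choice x with h | h <;> rw [h]
  rw [hw.1]
  omega

theorem one (n : ℕ) : IsSignedPerm n 1 :=
  ⟨fun _ => rfl, fun _ _ => rfl⟩

theorem mul (hu : IsSignedPerm n u) (hv : IsSignedPerm n v) : IsSignedPerm n (u * v) :=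
  ⟨fun x => by simp only [Perm.mul_apply, hv.1, hu.1],
    fun x hx => by simp only [Perm.mul_apply, hv.2 x hx, hu.2 x hx]⟩

theorem inv (hw : IsSignedPerm n w) : IsSignedPerm n w⁻¹ :=
  ⟨fun x => w.injective (by rw [hw.1, Perm.coe_inv, apply_symm_apply, apply_symm_apply]),
    fun x hx => w.injective (by rw [Perm.coe_inv, apply_symm_apply, hw.2 x hx])⟩

theorem abs_apply_mem_Icc (hw : IsSignedPerm n w) {x : ℤ} (hx : x ∈ Icc (1 : ℤ) n) :
    |w x| ∈ Icc (1 : ℤ) n := by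
  rw [mem_Icc] at hx ⊢
  have hpos := abs_pos.2 (hw.apply_ne_zero (x := x) (by omega))
  have hle := hw.abs_apply_le (x := x) (abs_le.2 ⟨by omega, by omega⟩)
  omega

theorem sum_comp_abs_apply {M : Type*} [AddCommMonoid M] (hw : IsSignedPerm n w) (f : ℤ → M) :
    ∑ x ∈ Icc (1 : ℤ) n, f |w x| = ∑ x ∈ Icc (1 : ℤ) n, f x := by
  have hinv : ∀ x ∈ Icc (1 : ℤ) n, |x| = x := fun x hx => abs_of_pos (mem_Icc.1 hx).1
  refine sum_nbij' (fun x => |w x|) (fun x => |w⁻¹ x|) (fun _ => hw.abs_apply_mem_Icc)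
    (fun _ => hw.inv.abs_apply_mem_Icc) (fun x hx => ?_) (fun x hx => ?_) (fun _ _ => rfl)
  · rw [hw.inv.abs_apply_abs, Perm.coe_inv, symm_apply_apply, hinv x hx]
  · rw [hw.abs_apply_abs, Perm.coe_inv, apply_symm_apply, hinv x hx]

theorem ite_apply_lt_zero (hw : IsSignedPerm n w) (x : ℤ) :
    (if w x < 0 then (1 : ZMod 2) else 0) =
      (if w |x| < 0 then 1 else 0) + (if x < 0 then 1 else 0) := by
  rcases lt_trichotomy x 0 with hx | rfl | hx
  · have hne := hw.apply_ne_zero (abs_ne_zero.2 hx.ne)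
    rw [abs_of_neg hx] at hne ⊢
    rw [← neg_neg x, hw.1 (-x), neg_neg]
    split_ifs <;> first | omega | decide
  · simp [hw.apply_zero]
  · simp [abs_of_pos hx, hx.not_gt]

theorem eq_one_of_zero (hw : IsSignedPerm 0 w) : w = 1 := by
  ext x
  rcases eq_or_ne x 0 with rfl | hx
  · exact hw.apply_zero
  · exact hw.2 x (by simpa using hx)

end IsSignedPerm

section Invariants

variable {n : ℕ} {u v w : Perm ℤ}

theorem tvdB_mul_le (hu : IsSignedPerm n u) (hv : IsSignedPerm n v) :
    tvdB n (u * v) ≤ tvdB n u + tvdB n v := by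
  calc tvdB n (u * v) ≤ ∑ x ∈ Icc (1 : ℤ) n, ((u (v x) - v x).natAbs + (v x - x).natAbs) :=
        sum_le_sum fun x _ => by rw [Perm.mul_apply]; omega
    _ = ∑ x ∈ Icc (1 : ℤ) n, (u |v x| - |v x|).natAbs + tvdB n v := by
        simp only [sum_add_distrib, hu.natAbs_apply_abs_sub]
        rfl
    _ = tvdB n u + tvdB n v := by
        rw [hv.sum_comp_abs_apply fun y => (u y - y).natAbs]
        rfl

noncomputable def negParity (n : ℕ) (w : Perm ℤ) : ZMod 2 :=
  ∑ x ∈ Icc (1 : ℤ) n, if w x < 0 then 1 else 0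

theorem isEvenSignedPerm_iff :
    IsEvenSignedPerm n w ↔ IsSignedPerm n w ∧ negParity n w = 0 := by
  rw [IsEvenSignedPerm, negParity, ← ZMod.natCast_eq_zero_iff_even, natCast_card_filter]

theorem negParity_mul (hu : IsSignedPerm n u) (hv : IsSignedPerm n v) :
    negParity n (u * v) = negParity n u + negParity n v := by
  calc negParity n (u * v)
        = ∑ x ∈ Icc (1 : ℤ) n,
            ((if u |v x| < 0 then 1 else 0) + (if v x < 0 then 1 else 0)) :=
        sum_congr rfl fun x _ => hu.ite_apply_lt_zero (v x)
    _ = negParity n u + negParity n v := by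
        rw [sum_add_distrib, hv.sum_comp_abs_apply fun y => if u y < 0 then (1 : ZMod 2) else 0]
        rfl

end Invariants

section Transposition

variable {i j : ℤ}

theorem swap_mul_swap_neg_apply (hi : i ≠ 0) (hj : j ≠ 0) (hji : j ≠ -i) (x : ℤ) :
    (swap i j * swap (-i) (-j)) x =
      if x = i then j else if x = j then i
      else if x = -i then -j else if x = -j then -i else x := by
  simp only [Perm.mul_apply, swap_apply_def]
  split_ifs <;> omega

theorem swap_mul_swap_neg_apply_left (hi : i ≠ 0) (hji : j ≠ -i) :
    (swap i j * swap (-i) (-j)) i = j := by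
  rw [Perm.mul_apply, swap_apply_of_ne_of_ne (x := i) (by omega) (by omega), swap_apply_left]

theorem swap_mul_swap_neg_apply_right (hj : j ≠ 0) (hji : j ≠ -i) :
    (swap i j * swap (-i) (-j)) j = i := by
  rw [Perm.mul_apply, swap_apply_of_ne_of_ne (x := j) (by omega) (by omega), swap_apply_right]

theorem swap_mul_swap_neg_apply_of_abs_ne {x : ℤ} (hxi : |x| ≠ |i|) (hxj : |x| ≠ |j|) :
    (swap i j * swap (-i) (-j)) x = x := by
  rw [Ne, abs_eq_abs, not_or] at hxi hxj
  simp only [Perm.mul_apply, swap_apply_def]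
  split_ifs <;> omega

theorem sum_Icc_swap_mul_swap_neg {M : Type*} [AddCommMonoid M] {n : ℕ}
    (hi : i ≠ 0) (hj : j ≠ 0) (hin : |i| ≤ n) (hjn : |j| ≤ n) (hij : i ≠ j) (hji : j ≠ -i)
    (f : ℤ → ℤ → M) (hf : ∀ x, 0 < x → f x x = 0) :
    ∑ x ∈ Icc (1 : ℤ) n, f x ((swap i j * swap (-i) (-j)) x) =
      f |i| ((swap i j * swap (-i) (-j)) |i|) + f |j| ((swap i j * swap (-i) (-j)) |j|) := by
  set t := swap i j * swap (-i) (-j)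
  have hne : |i| ≠ |j| := fun h => by rcases abs_eq_abs.1 h with h | h <;> omega
  rw [← sum_pair (f := fun x => f x (t x)) hne]
  refine (sum_subset (fun x hx => ?_) fun x hx hx' => ?_).symm
  · rw [mem_Icc]
    rcases mem_insert.1 hx with rfl | hx
    · exact ⟨abs_pos.2 hi, hin⟩
    · rw [mem_singleton.1 hx]
      exact ⟨abs_pos.2 hj, hjn⟩
  · have hx0 : 0 < x := (mem_Icc.1 hx).1
    rw [mem_insert, mem_singleton, not_or, ← abs_of_pos hx0] at hx'
    rw [swap_mul_swap_neg_apply_of_abs_ne hx'.1 hx'.2, hf x hx0]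

end Transposition

namespace IsDTransp

variable {n : ℕ} {t : Perm ℤ} {c : ℕ}

theorem isSignedPerm (ht : IsDTransp n t c) : IsSignedPerm n t := by
  obtain ⟨i, j, hi, hj, hin, hjn, hij, hji, rfl, -⟩ := ht
  rw [abs_le] at hin hjn
  refine ⟨fun x => ?_, fun x hx => ?_⟩ <;> simp only [swap_mul_swap_neg_apply hi hj hji]
  · split_ifs <;> omega
  · rw [lt_abs] at hx
    split_ifs <;> omega

theorem mul_self (ht : IsDTransp n t c) : t * t = 1 := by
  obtain ⟨i, j, hi, hj, -, -, -, hji, rfl, -⟩ := ht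
  have happly := swap_mul_swap_neg_apply hi hj hji
  ext x
  rw [Perm.mul_apply, happly, happly, Perm.one_apply]
  split_ifs <;> omega

theorem mono {m : ℕ} (ht : IsDTransp n t c) (hnm : n ≤ m) : IsDTransp m t c := by
  obtain ⟨i, j, hi, hj, hin, hjn, hij⟩ := ht
  have hnm' : (n : ℤ) ≤ m := by exact_mod_cast hnm
  exact ⟨i, j, hi, hj, hin.trans hnm', hjn.trans hnm', hij⟩

theorem tvdB_eq (ht : IsDTransp n t c) : tvdB n t = 2 * c := by
  have hsigned := ht.isSignedPerm
  obtain ⟨i, j, hi, hj, hin, hjn, hij, hji, rfl, rfl⟩ := ht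
  rw [tvdB, sum_Icc_swap_mul_swap_neg hi hj hin hjn hij hji (fun x y => (y - x).natAbs)
    (fun _ _ => by simp), hsigned.natAbs_apply_abs_sub, hsigned.natAbs_apply_abs_sub,
    swap_mul_swap_neg_apply_left hi hji, swap_mul_swap_neg_apply_right hj hji]
  omega

theorem negParity_eq_zero (ht : IsDTransp n t c) : negParity n t = 0 := by
  have hsigned := ht.isSignedPerm
  obtain ⟨i, j, hi, hj, hin, hjn, hij, hji, rfl, -⟩ := ht
  have hti := hsigned.ite_apply_lt_zero i
  have htj := hsigned.ite_apply_lt_zero j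
  rw [negParity, sum_Icc_swap_mul_swap_neg hi hj hin hjn hij hji (fun _ y => if y < 0 then 1 else 0)
    (fun _ hx => if_neg hx.not_gt)]
  rw [swap_mul_swap_neg_apply_left hi hji] at hti
  rw [swap_mul_swap_neg_apply_right hj hji] at htj
  have hchar2 : ∀ a b x y : ZMod 2, x = a + y → y = b + x → a + b = 0 := by decide
  exact hchar2 _ _ _ _ hti htj

end IsDTransp

def dTranspClosure (n : ℕ) : Submonoid (Perm ℤ) :=
  Submonoid.closure {t | ∃ c, IsDTransp n t c}

section Generation

variable {n : ℕ} {t w : Perm ℤ} {c : ℕ}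

theorem exists_list_of_mem_dTranspClosure (hw : w ∈ dTranspClosure n) :
    ∃ L : List (Perm ℤ × ℕ),
      (∀ p ∈ L, IsDTransp n p.1 p.2) ∧ (L.map Prod.fst).prod = w := by
  induction hw using Submonoid.closure_induction with
  | mem t ht =>
    obtain ⟨c, ht⟩ := ht
    exact ⟨[(t, c)], by simpa using ht, by simp⟩
  | one => exact ⟨[], by simp, by simp⟩
  | mul u v _ _ hu hv =>
    obtain ⟨L₁, hL₁, rfl⟩ := hu
    obtain ⟨L₂, hL₂, rfl⟩ := hv
    exact ⟨L₁ ++ L₂, fun p hp => (List.mem_append.1 hp).elim (hL₁ p) (hL₂ p), by simp⟩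

theorem dTranspClosure_mono {m : ℕ} (hnm : n ≤ m) : dTranspClosure n ≤ dTranspClosure m :=
  Submonoid.closure_mono fun _ ⟨c, ht⟩ => ⟨c, ht.mono hnm⟩

theorem mem_dTranspClosure_of_mul_mem (ht : IsDTransp n t c) (h : w * t ∈ dTranspClosure n) :
    w ∈ dTranspClosure n := by
  simpa [mul_assoc, ht.mul_self] using mul_mem h (Submonoid.subset_closure ⟨c, ht⟩)

theorem IsEvenSignedPerm.mul_isDTransp (hw : IsEvenSignedPerm n w) (ht : IsDTransp n t c) :
    IsEvenSignedPerm n (w * t) := by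
  rw [isEvenSignedPerm_iff] at hw ⊢
  refine ⟨hw.1.mul ht.isSignedPerm, ?_⟩
  rw [negParity_mul hw.1 ht.isSignedPerm, hw.2, ht.negParity_eq_zero, add_zero]

theorem IsEvenSignedPerm.of_succ_of_apply_eq (hw : IsEvenSignedPerm (n + 1) w)
    (hfix : w (n + 1) = n + 1) :
    IsEvenSignedPerm n w := by
  rw [isEvenSignedPerm_iff] at hw ⊢
  obtain ⟨⟨hneg, hout⟩, hpar⟩ := hw
  push_cast at hout
  refine ⟨⟨hneg, fun x hx => ?_⟩, ?_⟩
  · by_cases hxn : |x| = n + 1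
    · rcases (abs_eq (by positivity)).1 hxn with rfl | rfl
      · exact hfix
      · rw [hneg, hfix]
    · exact hout x (by omega)
  · rwa [negParity, Nat.cast_succ, ← insert_Icc_right_eq_Icc_add_one (by omega),
      sum_insert (by simp), hfix, if_neg (by omega), zero_add] at hpar

theorem IsEvenSignedPerm.apply_neg_one_ne_one (hw : IsEvenSignedPerm 1 w) : w (-1) ≠ 1 := by
  intro hneg
  have hw1 : w 1 = -1 := by
    have := hw.1.1 1
    omega
  have hpar := (isEvenSignedPerm_iff.1 hw).2
  rw [negParity, Nat.cast_one, Icc_self, sum_singleton, hw1, if_pos (by omega)] at hpar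
  exact one_ne_zero hpar

theorem IsSignedPerm.exists_isDTransp_mul_apply_self (hw : IsSignedPerm n w) {k : ℤ} (hk : 0 < k)
    (hkn : k ≤ n) (hfix : w k ≠ k) (hneg : w (-k) ≠ k) :
    ∃ t c, IsDTransp n t c ∧ (w * t) k = k := by
  set a := w⁻¹ k
  have hwa : w a = k := w.apply_symm_apply k
  have ha0 : a ≠ 0 := fun h => by rw [h, hw.apply_zero] at hwa; omega
  have hak : a ≠ k := fun h => hfix (h ▸ hwa)
  have hka : k ≠ -a := fun h => hneg (by rw [h, neg_neg, hwa, h])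
  have han : |a| ≤ n := hw.inv.abs_apply_le (by rwa [abs_of_pos hk])
  refine ⟨_, _, ⟨a, k, ha0, hk.ne', han, by rwa [abs_of_pos hk], hak, hka, rfl, rfl⟩, ?_⟩
  rw [Perm.mul_apply, swap_mul_swap_neg_apply_right hk.ne' hka, hwa]

theorem IsEvenSignedPerm.mem_dTranspClosure :
    ∀ {n : ℕ} {w : Perm ℤ}, IsEvenSignedPerm n w → w ∈ dTranspClosure n
  | 0, w, hw => by
    rw [hw.1.eq_one_of_zero]
    exact one_mem _
  | n + 1, w, hw => by
    have hfixed : ∀ v, IsEvenSignedPerm (n + 1) v → v (n + 1) = n + 1 →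
        v ∈ dTranspClosure (n + 1) := fun v hv h =>
      dTranspClosure_mono n.le_succ (mem_dTranspClosure (hv.of_succ_of_apply_eq h))
    have hmovable : ∀ v, IsEvenSignedPerm (n + 1) v → v (-(n + 1)) ≠ n + 1 →
        v ∈ dTranspClosure (n + 1) := by
      intro v hv hneg
      by_cases hfix : v (n + 1) = n + 1
      · exact hfixed v hv hfix
      obtain ⟨t, c, ht, htk⟩ :=
        hv.1.exists_isDTransp_mul_apply_self (by positivity) (by push_cast; rfl) hfix hneg
      exact mem_dTranspClosure_of_mul_mem ht (hfixed _ (hv.mul_isDTransp ht) htk)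
    by_cases hneg : w (-(n + 1)) = n + 1
    -- then `w (n + 1) = -(n + 1)`, and no single transposition puts `n + 1` back
    · have hn : n ≠ 0 := by
        rintro rfl
        exact hw.apply_neg_one_ne_one (by simpa using hneg)
      have ht : IsDTransp (n + 1) (swap (1 : ℤ) (n + 1) * swap (-1) (-(n + 1 : ℤ)))
          (1 - (n + 1 : ℤ)).natAbs :=
        ⟨1, n + 1, one_ne_zero, by omega, by simp, by push_cast; rw [abs_of_pos (by positivity)],
          by omega, by omega, rfl, rfl⟩
      refine mem_dTranspClosure_of_mul_mem ht (hmovable _ (hw.mul_isDTransp ht) ?_)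
      rw [Perm.mul_apply, ht.isSignedPerm.1, swap_mul_swap_neg_apply_right (by omega) (by omega),
        ← hneg]
      exact w.injective.ne (by omega)
    · exact hmovable w hw hneg

end Generation

theorem isSignedPerm_list_prod {n : ℕ} {L : List (Perm ℤ × ℕ)}
    (hL : ∀ p ∈ L, IsDTransp n p.1 p.2) : IsSignedPerm n (L.map Prod.fst).prod :=
  List.prod_induction _ (fun _ _ => IsSignedPerm.mul) (IsSignedPerm.one n)
    (by simpa using fun t c h => (hL (t, c) h).isSignedPerm)

theorem tvdB_list_prod_le {n : ℕ} {L : List (Perm ℤ × ℕ)}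
    (hL : ∀ p ∈ L, IsDTransp n p.1 p.2) :
    tvdB n (L.map Prod.fst).prod ≤ 2 * (L.map Prod.snd).sum := by
  induction L with
  | nil => simp [tvdB]
  | cons p L ih =>
    have hp := hL p List.mem_cons_self
    have hL' := fun q hq => hL q (List.mem_cons_of_mem p hq)
    rw [List.map_cons, List.prod_cons, List.map_cons, List.sum_cons, mul_add]
    exact (tvdB_mul_le hp.isSignedPerm (isSignedPerm_list_prod hL')).trans
      (add_le_add hp.tvdB_eq.le (ih hL'))

/-- For every even-signed permutation `w ∈ S^D_n`, the cost of `w` (computed with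
factorizations into transpositions of `S^D_n`) is at least half of its total
displacement: `$(w) ≥ tvd(w)/2`. -/
theorem cost_ge_half_tvd_typeD (n : ℕ) (w : Equiv.Perm ℤ) (hw : IsEvenSignedPerm n w) :
    tvdB n w ≤ 2 * costD n w := by
  obtain ⟨L, hL, hprod⟩ := exists_list_of_mem_dTranspClosure hw.mem_dTranspClosure
  obtain ⟨L', hL', rfl, hcost⟩ : costD n w ∈ _ := Nat.sInf_mem ⟨_, L, hL, hprod, rfl⟩
  rw [hcost]
  exact tvdB_list_prod_le hL'
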